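/- arXiv:2307.03076 — 8 statements merged into one kernel-verified Lean document; each statement's English description precedes it below -/
import Mathlib

section
/- In the four-vertex model on an L×M rectangle with scalar-product boundary conditions (N ≤ L ≤ M), the number of vertices of each type is the same for every admissible configuration: #a = (L−N)(M−N), #b = N(M−L+N), and #c = 2N(L−N). -/
/-- A configuration of the four-vertex model on an `L × M` rectangle with
`scalar-product` boundary conditions (`N` paths).  `h (n, m)` is the state
(thick = `true`) of the horizontal edge from vertex `(n, m)` to `(n+1, m)`,
and `v (n, m)` is the state of the vertical edge from `(n, m)` to `(n, m+1)`
(so `v (n, 0)` is the south boundary edge below vertex `(n,1)` and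
`v (n, M)` is the north boundary edge above vertex `(n, M)`).
At each vertex the quadruple (west, south, east, north) of incident edge
states must be one of the four allowed vertex configurations:
type `a` (all thin), type `b` (vertical path through), and the two turning
type `c` vertices; in particular two consecutive horizontal thick edges are
forbidden.  The first `N` south boundary edges and the last `N` north
boundary edges are thick, all other boundary edges are thin. -/
structure FourVertexConfig (L M N : ℕ) where
  h : ℤ × ℤ → Bool
  v : ℤ × ℤ → Bool
  h_support : ∀ n m : ℤ, (n < 1 ∨ (L : ℤ) ≤ n ∨ m < 1 ∨ (M : ℤ) < m) → h (n, m) = false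
  v_support : ∀ n m : ℤ, (n < 1 ∨ (L : ℤ) < n ∨ m < 0 ∨ (M : ℤ) < m) → v (n, m) = false
  south : ∀ n : ℤ, 1 ≤ n → n ≤ (L : ℤ) → (v (n, 0) = true ↔ n ≤ (N : ℤ))
  north : ∀ n : ℤ, 1 ≤ n → n ≤ (L : ℤ) → (v (n, (M : ℤ)) = true ↔ (L : ℤ) - (N : ℤ) < n)
  vertexRule : ∀ n m : ℤ, 1 ≤ n → n ≤ (L : ℤ) → 1 ≤ m → m ≤ (M : ℤ) →
    (h (n-1, m) = false ∧ v (n, m-1) = false ∧ h (n, m) = false ∧ v (n, m) = false) ∨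
    (h (n-1, m) = false ∧ v (n, m-1) = true  ∧ h (n, m) = false ∧ v (n, m) = true) ∨
    (h (n-1, m) = false ∧ v (n, m-1) = true  ∧ h (n, m) = true  ∧ v (n, m) = false) ∨
    (h (n-1, m) = true  ∧ v (n, m-1) = false ∧ h (n, m) = false ∧ v (n, m) = true)

/-- Vertex of type `a`: all four incident edges thin. -/
def isA {L M N : ℕ} (c : FourVertexConfig L M N) (nm : ℤ × ℤ) : Bool :=
  !c.h (nm.1 - 1, nm.2) && !c.v (nm.1, nm.2 - 1) && !c.h nm && !c.v nm

/-- Vertex of type `b`: a path passing straight through vertically. -/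
def isB {L M N : ℕ} (c : FourVertexConfig L M N) (nm : ℤ × ℤ) : Bool :=
  !c.h (nm.1 - 1, nm.2) && c.v (nm.1, nm.2 - 1) && !c.h nm && c.v nm

/-- Vertex of type `c`: one of the two turning vertices. -/
def isC {L M N : ℕ} (c : FourVertexConfig L M N) (nm : ℤ × ℤ) : Bool :=
  (!c.h (nm.1 - 1, nm.2) && c.v (nm.1, nm.2 - 1) && c.h nm && !c.v nm) ||
  (c.h (nm.1 - 1, nm.2) && !c.v (nm.1, nm.2 - 1) && !c.h nm && c.v nm)


open Finset

lemma sum_shiftZ {β : Type*} [AddCommMonoid β] (f : ℤ → β) (K : ℤ) (hK : 1 ≤ K)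
    (h0 : f 0 = 0) (hK2 : f K = 0) :
    ∑ n ∈ Icc 1 K, f (n - 1) = ∑ n ∈ Icc 1 K, f n := by
  have h1 : ∑ n ∈ Icc 1 K, f (n - 1) = ∑ n ∈ Icc 0 (K-1), f n := by
    apply Finset.sum_nbij' (fun n => n - 1) (fun n => n + 1) <;> simp [Finset.mem_Icc] <;> omega
  have e1 : Icc (0:ℤ) (K-1) = insert 0 (Icc 1 (K-1)) := by ext x; simp [mem_Icc]; omega
  have e2 : Icc (1:ℤ) K = insert K (Icc 1 (K-1)) := by ext x; simp [mem_Icc]; omega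
  rw [h1, e1, e2, sum_insert (by simp), sum_insert (by simp [mem_Icc])]
  rw [h0, hK2]

section Aux
variable {L M N : ℕ} (c : FourVertexConfig L M N)

noncomputable def Vs (m : ℤ) : ℕ := ∑ n ∈ Icc (1:ℤ) (L:ℤ), (c.v (n, m)).toNat
noncomputable def RowH (m : ℤ) : ℕ := ∑ n ∈ Icc (1:ℤ) (L:ℤ), (c.h (n, m)).toNat
noncomputable def W (m : ℤ) : ℤ := ∑ n ∈ Icc (1:ℤ) (L:ℤ), n * ((c.v (n, m)).toNat : ℤ)

lemma balance (n m : ℤ) (h1 : 1 ≤ n) (h2 : n ≤ (L:ℤ)) (h3 : 1 ≤ m) (h4 : m ≤ (M:ℤ)) :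
    (c.h (n-1, m)).toNat + (c.v (n, m-1)).toNat = (c.h (n, m)).toNat + (c.v (n, m)).toNat := by
  rcases c.vertexRule n m h1 h2 h3 h4 with ⟨e1,e2,e3,e4⟩|⟨e1,e2,e3,e4⟩|⟨e1,e2,e3,e4⟩|⟨e1,e2,e3,e4⟩ <;>
    simp [e1, e2, e3, e4]

lemma balanceZ (n m : ℤ) (h1 : 1 ≤ n) (h2 : n ≤ (L:ℤ)) (h3 : 1 ≤ m) (h4 : m ≤ (M:ℤ)) :
    n * ((c.h (n-1, m)).toNat : ℤ) + n * ((c.v (n, m-1)).toNat : ℤ)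
      = n * ((c.h (n, m)).toNat : ℤ) + n * ((c.v (n, m)).toNat : ℤ) := by
  rcases c.vertexRule n m h1 h2 h3 h4 with ⟨e1,e2,e3,e4⟩|⟨e1,e2,e3,e4⟩|⟨e1,e2,e3,e4⟩|⟨e1,e2,e3,e4⟩ <;>
    simp [e1, e2, e3, e4]

variable (hL : 1 ≤ (L:ℤ))

include hL in
lemma rowH_shift (m : ℤ) :
    ∑ n ∈ Icc (1:ℤ) (L:ℤ), (c.h (n-1, m)).toNat = RowH c m := by
  apply sum_shiftZ (fun n => (c.h (n, m)).toNat) _ hL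
  · simp [c.h_support 0 m (by omega)]
  · simp [c.h_support L m (by omega)]

include hL in
lemma rowV_step (m : ℤ) (h3 : 1 ≤ m) (h4 : m ≤ (M:ℤ)) : Vs c (m-1) = Vs c m := by
  have key : ∑ n ∈ Icc (1:ℤ) (L:ℤ), ((c.h (n-1, m)).toNat + (c.v (n, m-1)).toNat)
      = ∑ n ∈ Icc (1:ℤ) (L:ℤ), ((c.h (n, m)).toNat + (c.v (n, m)).toNat) := by
    refine Finset.sum_congr rfl fun n hn => ?_
    rw [mem_Icc] at hn
    exact balance c n m hn.1 hn.2 h3 h4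
  rw [Finset.sum_add_distrib, Finset.sum_add_distrib, rowH_shift c hL] at key
  unfold Vs RowH at *
  omega

omit hL in
lemma Vs_zero (hNL : (N:ℤ) ≤ (L:ℤ)) : Vs c 0 = N := by
  have hcongr : ∀ n ∈ Icc (1:ℤ) (L:ℤ), (c.v (n, 0)).toNat = if n ≤ (N:ℤ) then 1 else 0 := by
    intro n hn
    rw [mem_Icc] at hn
    have hs := c.south n hn.1 hn.2
    by_cases hle : n ≤ (N:ℤ)
    · simp only [hle, if_true]
      have : c.v (n, 0) = true := hs.mpr hle
      simp [this]
    · simp only [hle, if_false]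
      have : c.v (n, 0) ≠ true := fun h => hle (hs.mp h)
      simp [Bool.not_eq_true] at this
      simp [this]
  unfold Vs
  rw [Finset.sum_congr rfl hcongr, ← Finset.card_filter]
  have : (Icc (1:ℤ) (L:ℤ)).filter (fun n => n ≤ (N:ℤ)) = Icc (1:ℤ) (N:ℤ) := by
    ext x; simp [mem_Icc, mem_filter]; omega
  rw [this, Int.card_Icc]
  simp

include hL in
lemma Vs_all (hNL : (N:ℤ) ≤ (L:ℤ)) (m : ℤ) (hm0 : 0 ≤ m) (hm1 : m ≤ (M:ℤ)) : Vs c m = N := by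
  lift m to ℕ using hm0
  induction m with
  | zero => exact_mod_cast Vs_zero c hNL
  | succ k ih =>
    have h1 : Vs c ((k:ℤ) + 1 - 1) = Vs c ((k:ℤ)+1) := by
      apply rowV_step c hL _ (by omega) (by push_cast at hm1 ⊢; omega)
    have h2 : Vs c k = N := ih (by push_cast at hm1 ⊢; omega)
    push_cast
    rw [← h1]
    simpa using h2

include hL in
lemma W_step (m : ℤ) (h3 : 1 ≤ m) (h4 : m ≤ (M:ℤ)) :
    W c m = W c (m-1) + (RowH c m : ℤ) := by
  have key : ∑ n ∈ Icc (1:ℤ) (L:ℤ), (n * ((c.h (n-1, m)).toNat : ℤ) + n * ((c.v (n, m-1)).toNat : ℤ))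
      = ∑ n ∈ Icc (1:ℤ) (L:ℤ), (n * ((c.h (n, m)).toNat : ℤ) + n * ((c.v (n, m)).toNat : ℤ)) := by
    refine Finset.sum_congr rfl fun n hn => ?_
    rw [mem_Icc] at hn
    exact balanceZ c n m hn.1 hn.2 h3 h4
  rw [Finset.sum_add_distrib, Finset.sum_add_distrib] at key
  have shift : ∑ n ∈ Icc (1:ℤ) (L:ℤ), n * ((c.h (n-1, m)).toNat : ℤ)
      = ∑ n ∈ Icc (1:ℤ) (L:ℤ), ((n+1) * ((c.h (n, m)).toNat : ℤ)) := by
    have := sum_shiftZ (fun t => (t+1) * ((c.h (t, m)).toNat : ℤ)) (L:ℤ) hL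
      (by simp [c.h_support 0 m (by omega)]) (by simp [c.h_support L m (by omega)])
    simpa using this
  have expand : ∑ n ∈ Icc (1:ℤ) (L:ℤ), ((n+1) * ((c.h (n, m)).toNat : ℤ))
      = (∑ n ∈ Icc (1:ℤ) (L:ℤ), n * ((c.h (n, m)).toNat : ℤ)) + (RowH c m : ℤ) := by
    rw [show (((RowH c m) : ℤ)) = ∑ n ∈ Icc (1:ℤ) (L:ℤ), ((c.h (n, m)).toNat : ℤ) by
      unfold RowH; push_cast; ring]
    rw [← Finset.sum_add_distrib]
    exact Finset.sum_congr rfl fun n _ => by ring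
  rw [shift, expand] at key
  unfold W
  linarith

include hL in
lemma W_nat : ∀ k : ℕ, (k:ℤ) ≤ (M:ℤ) →
    W c k = W c 0 + ∑ m ∈ Icc (1:ℤ) (k:ℤ), (RowH c m : ℤ) := by
  intro k
  induction k with
  | zero => intro _; simp
  | succ k ih =>
    intro hk
    have hki : (k:ℤ) ≤ (M:ℤ) := by push_cast at hk ⊢; omega
    have h1 := W_step c hL ((k:ℤ)+1) (by omega) (by push_cast at hk ⊢; omega)
    have e2 : Icc (1:ℤ) ((k:ℤ)+1) = insert ((k:ℤ)+1) (Icc (1:ℤ) (k:ℤ)) := by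
      ext x; simp [mem_Icc]; omega
    push_cast
    rw [h1, e2, sum_insert (by simp [mem_Icc])]
    have hc : (k:ℤ) + 1 - 1 = (k:ℤ) := by ring
    rw [hc, ih hki]
    ring

omit hL in
lemma W_zero (hNL : (N:ℤ) ≤ (L:ℤ)) : W c 0 = ∑ n ∈ Icc (1:ℤ) (N:ℤ), n := by
  have hcongr : ∀ n ∈ Icc (1:ℤ) (L:ℤ),
      n * ((c.v (n, 0)).toNat : ℤ) = if n ≤ (N:ℤ) then n else 0 := by
    intro n hn
    rw [mem_Icc] at hn
    have hs := c.south n hn.1 hn.2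
    by_cases hle : n ≤ (N:ℤ)
    · have : c.v (n, 0) = true := hs.mpr hle
      simp [this, hle]
    · have : c.v (n, 0) ≠ true := fun h => hle (hs.mp h)
      simp [Bool.not_eq_true] at this
      simp [this, hle]
  unfold W
  rw [Finset.sum_congr rfl hcongr, ← Finset.sum_filter]
  congr 1
  ext x; simp [mem_Icc, mem_filter]; omega

omit hL in
lemma W_top (hNL : (N:ℤ) ≤ (L:ℤ)) : W c M = ∑ n ∈ Icc ((L:ℤ)-(N:ℤ)+1) (L:ℤ), n := by
  have hcongr : ∀ n ∈ Icc (1:ℤ) (L:ℤ),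
      n * ((c.v (n, (M:ℤ))).toNat : ℤ) = if (L:ℤ)-(N:ℤ) < n then n else 0 := by
    intro n hn
    rw [mem_Icc] at hn
    have hs := c.north n hn.1 hn.2
    by_cases hle : (L:ℤ)-(N:ℤ) < n
    · have : c.v (n, (M:ℤ)) = true := hs.mpr hle
      simp [this, hle]
    · have : c.v (n, (M:ℤ)) ≠ true := fun h => hle (hs.mp h)
      simp [Bool.not_eq_true] at this
      simp [this, hle]
  unfold W
  rw [Finset.sum_congr rfl hcongr, ← Finset.sum_filter]
  congr 1
  ext x; simp [mem_Icc, mem_filter]; omega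

include hL in
lemma Htot_eq (hNL : (N:ℤ) ≤ (L:ℤ)) (hM : (L:ℤ) ≤ (M:ℤ)) :
    ((∑ m ∈ Icc (1:ℤ) (M:ℤ), RowH c m : ℕ) : ℤ) = (N:ℤ) * ((L:ℤ) - (N:ℤ)) := by
  have hW := W_nat c hL M le_rfl
  rw [W_zero c hNL, W_top c hNL] at hW
  have harith : (∑ n ∈ Icc ((L:ℤ)-(N:ℤ)+1) (L:ℤ), n)
      = (∑ n ∈ Icc (1:ℤ) (N:ℤ), n) + (N:ℤ) * ((L:ℤ) - (N:ℤ)) := by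
    have h1 : ∑ n ∈ Icc ((L:ℤ)-(N:ℤ)+1) (L:ℤ), n
        = ∑ n ∈ Icc (1:ℤ) (N:ℤ), (n + ((L:ℤ)-(N:ℤ))) := by
      apply Finset.sum_nbij' (fun n => n - ((L:ℤ)-(N:ℤ))) (fun n => n + ((L:ℤ)-(N:ℤ))) <;>
        simp [Finset.mem_Icc] <;> omega
    rw [h1, Finset.sum_add_distrib, Finset.sum_const, Int.card_Icc]
    have : ((N:ℤ) + 1 - 1).toNat = N := by omega
    rw [this]
    ring
  rw [harith] at hW
  push_cast at hW ⊢
  linarith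
end Aux

/-- In the four-vertex model with scalar-product boundary conditions,
every admissible configuration has the same number of vertices of each type:
`#a = (L-N)(M-N)`, `#b = N(M-L+N)`, `#c = 2N(L-N)`. -/

theorem fourVertex_vertex_counts (L M N : ℕ) (hN : 1 ≤ N) (hNL : N ≤ L) (hLM : L ≤ M)
    (c : FourVertexConfig L M N) :
    (((Finset.Icc (1:ℤ) L) ×ˢ (Finset.Icc (1:ℤ) M)).filter
        (fun nm => isA c nm = true)).card = (L - N) * (M - N) ∧
    (((Finset.Icc (1:ℤ) L) ×ˢ (Finset.Icc (1:ℤ) M)).filter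
        (fun nm => isB c nm = true)).card = N * (M - L + N) ∧
    (((Finset.Icc (1:ℤ) L) ×ˢ (Finset.Icc (1:ℤ) M)).filter
        (fun nm => isC c nm = true)).card = 2 * N * (L - N) := by
  have hNM : N ≤ M := hNL.trans hLM
  have hL : (1:ℤ) ≤ (L:ℤ) := by exact_mod_cast hN.trans hNL
  have hNL' : (N:ℤ) ≤ (L:ℤ) := by exact_mod_cast hNL
  have hLM' : (L:ℤ) ≤ (M:ℤ) := by exact_mod_cast hLM
  set box := (Finset.Icc (1:ℤ) (L:ℤ)) ×ˢ (Finset.Icc (1:ℤ) (M:ℤ)) with hbox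
  set Htot : ℕ := ∑ m ∈ Icc (1:ℤ) (M:ℤ), RowH c m with hHtotdef
  set A := (box.filter (fun nm => isA c nm = true)).card with hAdef
  set B := (box.filter (fun nm => isB c nm = true)).card with hBdef
  set C := (box.filter (fun nm => isC c nm = true)).card with hCdef
  have hmem : ∀ p ∈ box, 1 ≤ p.1 ∧ p.1 ≤ (L:ℤ) ∧ 1 ≤ p.2 ∧ p.2 ≤ (M:ℤ) := by
    intro p hp
    rw [hbox, Finset.mem_product, Finset.mem_Icc, Finset.mem_Icc] at hp
    exact ⟨hp.1.1, hp.1.2, hp.2.1, hp.2.2⟩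
  have pt : ∀ p ∈ box,
      ((isA c p).toNat + (isB c p).toNat + (isC c p).toNat = 1) ∧
      ((isC c p).toNat = (c.h (p.1 - 1, p.2)).toNat + (c.h p).toNat) ∧
      ((isB c p).toNat + (c.h p).toNat = (c.v (p.1, p.2 - 1)).toNat) := by
    intro p hp
    obtain ⟨h1, h2, h3, h4⟩ := hmem p hp
    obtain ⟨n, m⟩ := p
    rcases c.vertexRule n m h1 h2 h3 h4 with
      ⟨e1,e2,e3,e4⟩|⟨e1,e2,e3,e4⟩|⟨e1,e2,e3,e4⟩|⟨e1,e2,e3,e4⟩ <;>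
      simp [isA, isB, isC, e1, e2, e3, e4]
  have cardA : A = ∑ p ∈ box, (isA c p).toNat := by
    rw [hAdef, Finset.card_filter]
    exact Finset.sum_congr rfl fun p _ => by cases isA c p <;> rfl
  have cardB : B = ∑ p ∈ box, (isB c p).toNat := by
    rw [hBdef, Finset.card_filter]
    exact Finset.sum_congr rfl fun p _ => by cases isB c p <;> rfl
  have cardC : C = ∑ p ∈ box, (isC c p).toNat := by
    rw [hCdef, Finset.card_filter]
    exact Finset.sum_congr rfl fun p _ => by cases isC c p <;> rfl
  have hHbox : ∑ p ∈ box, (c.h p).toNat = Htot := by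
    rw [hbox, Finset.sum_product, Finset.sum_comm, hHtotdef]
    rfl
  have hWestbox : ∑ p ∈ box, (c.h (p.1 - 1, p.2)).toNat = Htot := by
    rw [hbox, Finset.sum_product, Finset.sum_comm, hHtotdef]
    exact Finset.sum_congr rfl fun m _ => rowH_shift c hL m
  have hSouthbox : ∑ p ∈ box, (c.v (p.1, p.2 - 1)).toNat = N * M := by
    rw [hbox, Finset.sum_product, Finset.sum_comm]
    have hc : ∀ m ∈ Icc (1:ℤ) (M:ℤ),
        (∑ n ∈ Icc (1:ℤ) (L:ℤ), (c.v (n, m - 1)).toNat) = N := by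
      intro m hm
      rw [Finset.mem_Icc] at hm
      exact Vs_all c hL hNL' (m - 1) (by omega) (by omega)
    rw [Finset.sum_congr rfl hc, Finset.sum_const, smul_eq_mul, Int.card_Icc]
    simp [mul_comm]
  have hABC : A + B + C = L * M := by
    rw [cardA, cardB, cardC, ← Finset.sum_add_distrib, ← Finset.sum_add_distrib,
      Finset.sum_congr rfl (fun p hp => (pt p hp).1), Finset.sum_const, smul_eq_mul,
      mul_one, hbox, Finset.card_product, Int.card_Icc, Int.card_Icc]
    simp
  have h1 : C = Htot + Htot := by
    rw [cardC, Finset.sum_congr rfl (fun p hp => (pt p hp).2.1), Finset.sum_add_distrib,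
      hWestbox, hHbox]
  have h2 : B + Htot = N * M := by
    rw [cardB, ← hHbox, ← Finset.sum_add_distrib,
      Finset.sum_congr rfl (fun p hp => (pt p hp).2.2), hSouthbox]
  have h4 : ((Htot : ℕ) : ℤ) = (N:ℤ) * ((L:ℤ) - (N:ℤ)) := by
    rw [hHtotdef]
    exact Htot_eq c hL hNL' hLM'
  have hABC' : (A:ℤ) + B + C = (L:ℤ) * M := by exact_mod_cast hABC
  have h1' : (C:ℤ) = (Htot:ℤ) + Htot := by exact_mod_cast h1
  have h2' : (B:ℤ) + Htot = (N:ℤ) * M := by exact_mod_cast h2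
  refine ⟨?_, ?_, ?_⟩
  · zify [hNL, hNM]
    linear_combination hABC' - h2' - h1' - h4
  · zify [hLM]
    linear_combination h2' - h4
  · zify [hNL]
    linear_combination h1' + 2 * h4
end

section
/- The determinant of the N×N matrix with (i,j) entry the binomial coefficient C(M+i−j, L−N+i−j) equals the product over j from 1 to N of ((j−1)!·(M−N+j)!)/((L−N+j−1)!·(M−L+j)!), for integers M ≥ L > N ≥ 1. -/
/-- Binomial coefficient `C(a, k)` for integer arguments, with the convention
that it vanishes when `k < 0` or `k > a`. -/
def zchoose (a k : ℤ) : ℕ :=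
  if 0 ≤ k ∧ k ≤ a then a.toNat.choose k.toNat else 0

/-!
With `c = M - L + N`, the `(i, j)` entry is `C(M + i - j, c)` (indices from `0`). Vandermonde's
convolution factors this matrix as the unitriangular Pascal matrix `(C(i, k))` times
`(C(M - j, c - k))`, and reversing rows and columns turns the latter into `(C(a + j, b + i))` with
`a = M - N + 1`, `b = M - L + 1`. Since `(b + i)! C(a + j, b + i) = (a + j)↓b · (L - N + j)↓i`
(falling factorials), extracting row and column factors leaves the Vandermonde determinant of the
falling-factorial basis at the nodes `L - N + j`, which is `∏_{k < N} k!`.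
-/

open Finset Matrix Nat

theorem zchoose_sub_natCast {x : ℤ} (hx : 0 ≤ x) (c : ℕ) :
    zchoose x (x - c) = x.toNat.choose c := by
  unfold zchoose
  split_ifs with h
  · rw [show (x - c).toNat = x.toNat - c by omega, choose_symm (by omega)]
  · rw [choose_eq_zero_of_lt (by omega)]

theorem Nat.factorial_add_mul_choose_add (x b i : ℕ) :
    (b + i)! * x.choose (b + i) = x.descFactorial b * (x - b).descFactorial i := by
  rw [← descFactorial_eq_factorial_mul_choose,
    ← descFactorial_mul_descFactorial (Nat.le_add_right b i), Nat.add_sub_cancel_left, mul_comm]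

theorem Nat.add_choose_eq_sum_range {i n c : ℕ} (y : ℕ) (hi : i < n) (hn : n ≤ c + 1) :
    (i + y).choose c = ∑ k ∈ range n, i.choose k * y.choose (c - k) := by
  rw [add_choose_eq, Nat.sum_antidiagonal_eq_sum_range_succ_mk]
  refine (sum_subset (range_subset_range.2 hn) fun k _ hk => ?_).symm
  rw [choose_eq_zero_of_lt (by simp at hk; omega), zero_mul]

theorem Matrix.det_descPochhammer_eval_add_nat {R : Type*} [CommRing R] [IsDomain R] (x : R)
    (n : ℕ) :
    (of fun i j : Fin n => (descPochhammer R i).eval (j + x)).det =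
      ∏ k ∈ range n, (k ! : R) := by
  rw [← det_transpose,
    show (of fun i j : Fin n => (descPochhammer R i).eval (j + x))ᵀ =
      of fun i j : Fin n => (descPochhammer R j).eval (i + x) from rfl,
    ← det_eval_matrixOfPolynomials_eq_det_vandermonde _ (fun j : Fin n => descPochhammer R j)
      (fun j => descPochhammer_natDegree R j) (fun j => monic_descPochhammer R j),
    det_vandermonde_add]
  cases n with
  | zero => simp
  | succ n =>
    rw [det_vandermonde_id_eq_superFactorial, ← prod_range_succ_factorial]
    push_cast
    rfl

theorem Matrix.det_choose_add_sub {R : Type*} [CommRing R] {m c n : ℕ} (hnc : n ≤ c)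
    (hnm : n ≤ m + 1) :
    (of fun i j : Fin n => ((m + i - j).choose c : R)).det =
      (of fun i j : Fin n => ((m + 1 - n + j).choose (c + 1 - n + i) : R)).det := by
  set P : Matrix (Fin n) (Fin n) R := of fun i k => (i.1.choose k : R)
  have hP : P.det = 1 := by
    rw [det_of_isLowerTriangular P fun i k (hik : i < k) => by simp [P, choose_eq_zero_of_lt hik]]
    simp [P]
  have hfactor : (of fun i j : Fin n => ((m + i - j).choose c : R)) =
      P * of fun k j : Fin n => ((m - j).choose (c - k) : R) := by
    ext i j
    rw [mul_apply, of_apply, show m + i - j = i + (m - j) by omega,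
      add_choose_eq_sum_range (m - j) i.2 (by omega), ← Fin.sum_univ_eq_sum_range]
    simp [P]
  rw [hfactor, det_mul, hP, one_mul, ← det_submatrix_equiv_self Fin.revPerm]
  congr 1
  ext i j
  simp only [submatrix_apply, Fin.revPerm_apply, of_apply, Fin.val_rev]
  congr 2 <;> omega

theorem Matrix.det_choose_add_add {K : Type*} [Field K] [CharZero K] {a b : ℕ} (hba : b ≤ a)
    (n : ℕ) :
    (of fun i j : Fin n => ((a + j).choose (b + i) : K)).det =
      ∏ k ∈ range n, (k ! * (a + k)! : K) / ((a - b + k)! * (b + k)!) := by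
  have hne (m : ℕ) : (m ! : K) ≠ 0 := Nat.cast_ne_zero.2 (factorial_ne_zero m)
  have hfactor : (of fun i j : Fin n => ((a + j).choose (b + i) : K)) =
      diagonal (fun i : Fin n => ((b + i)! : K)⁻¹) *
        ((of fun i j : Fin n => (descPochhammer K i).eval (j + ((a - b : ℕ) : K))) *
          diagonal fun j : Fin n => ((a + j).descFactorial b : K)) := by
    ext i j
    rw [diagonal_mul, mul_diagonal, of_apply, of_apply, eq_inv_mul_iff_mul_eq₀ (hne _),
      show (j : K) + ((a - b : ℕ) : K) = ((a + j - b : ℕ) : K) by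
        rw [Nat.cast_sub hba, Nat.cast_sub (by omega)]; push_cast; ring,
      descPochhammer_eval_eq_descFactorial]
    exact_mod_cast (factorial_add_mul_choose_add (a + j) b i).trans (mul_comm _ _)
  rw [hfactor, det_mul, det_mul, det_diagonal, det_diagonal, det_descPochhammer_eval_add_nat,
    Fin.prod_univ_eq_prod_range (fun i => ((b + i)! : K)⁻¹),
    Fin.prod_univ_eq_prod_range (fun j => ((a + j).descFactorial b : K)),
    ← prod_mul_distrib, ← prod_mul_distrib]
  refine prod_congr rfl fun k _ => ?_
  have hdesc := factorial_mul_descFactorial (n := a + k) (k := b) (by omega)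
  rw [show a + k - b = a - b + k by omega] at hdesc
  rw [← hdesc, Nat.cast_mul]
  field_simp [hne]

theorem det_binomial_eq_product_general (L M N : ℕ) (hNL : N < L) (hLM : L ≤ M) :
    (Matrix.of fun i j : Fin N =>
        (zchoose ((M : ℤ) + (i.1 + 1) - (j.1 + 1))
                 ((L : ℤ) - N + (i.1 + 1) - (j.1 + 1)) : ℚ)).det
      = ∏ j ∈ Finset.Icc 1 N,
          ((Nat.factorial (j - 1) : ℚ) * (Nat.factorial (M - N + j) : ℚ)) /
            ((Nat.factorial (L - N + j - 1) : ℚ) * (Nat.factorial (M - L + j) : ℚ)) := by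
  have hentry (i j : Fin N) : zchoose ((M : ℤ) + (i.1 + 1) - (j.1 + 1))
      ((L : ℤ) - N + (i.1 + 1) - (j.1 + 1)) = (M + i - j).choose (M - L + N) := by
    convert zchoose_sub_natCast (x := (M : ℤ) + (i.1 + 1) - (j.1 + 1)) (by omega) (M - L + N)
      using 2 <;> omega
  simp only [hentry]
  rw [det_choose_add_sub (by omega) (by omega), det_choose_add_add (by omega),
    ← Ico_add_one_right_eq_Icc, prod_Ico_eq_prod_range, Nat.add_sub_cancel]
  refine prod_congr rfl fun k _ => ?_
  congr 4 <;> omega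

/-- The determinant of the `N × N` matrix with `(i,j)` entry `C(M+i-j, L-N+i-j)`
equals `∏_{j=1}^{N} (j-1)! (M-N+j)! / ((L-N+j-1)! (M-L+j)!)`, for `M ≥ L > N ≥ 1`. -/
theorem det_binomial_eq_product (L M N : ℕ) (hN : 1 ≤ N) (hNL : N < L) (hLM : L ≤ M) :
    (Matrix.of fun i j : Fin N =>
        (zchoose ((M : ℤ) + (i.1 + 1) - (j.1 + 1))
                 ((L : ℤ) - N + (i.1 + 1) - (j.1 + 1)) : ℚ)).det
      = ∏ j ∈ Finset.Icc 1 N,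
          ((Nat.factorial (j - 1) : ℚ) * (Nat.factorial (M - N + j) : ℚ)) /
            ((Nat.factorial (L - N + j - 1) : ℚ) * (Nat.factorial (M - L + j) : ℚ)) :=
  det_binomial_eq_product_general L M N hNL hLM
end

section
/- The product ∏_{j=1}^{N} ((j−1)!·(M−N+j)!)/((L−N+j−1)!·(M−L+j)!) equals the MacMahon product PL(N, L−N, M−L+1) = ∏_{i=1}^{N} ∏_{j=1}^{L−N} ∏_{k=1}^{M−L+1} (i+j+k−1)/(i+j+k−2), for integers M ≥ L > N ≥ 1. -/
/-!
For fixed `i` and `j` the product over `k ≤ n` telescopes to `(i + j + n - 1) / (i + j - 1)`, and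
the product of these over `j` is a quotient of two ascending products, i.e. of factorials. This
is the `i`-th factor of the left-hand side.
-/

open Finset Nat

section

variable {K : Type*} [Field K] [CharZero K]

theorem prod_Icc_add_div_add_sub_one {x : ℕ} (hx : 0 < x) (n : ℕ) :
    ∏ k ∈ Icc 1 n, ((x : K) + k) / (x + k - 1) = (x + n) / x := by
  induction n with
  | zero => simp [div_self (Nat.cast_ne_zero.mpr hx.ne' : (x : K) ≠ 0)]
  | succ n ih =>
    rw [prod_Icc_succ_top (by omega), ih, cast_succ, ← add_assoc, add_sub_cancel_right]
    have : (x : K) + n ≠ 0 := by norm_cast; omega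
    rw [mul_comm, div_mul_div_cancel₀ this]

theorem prod_Icc_natCast_add_eq_factorial_div (c n : ℕ) :
    ∏ j ∈ Icc 1 n, ((c : K) + j) = ((c + n)! : K) / c ! := by
  induction n with
  | zero => simp [div_self (Nat.cast_ne_zero.mpr c.factorial_ne_zero : (c ! : K) ≠ 0)]
  | succ n ih =>
    rw [prod_Icc_succ_top (by omega), ih, ← add_assoc, factorial_succ]
    push_cast
    ring

theorem macmahon_layer_eq_factorial_ratio {i : ℕ} (hi : 1 ≤ i) (b n : ℕ) :
    ∏ j ∈ Icc 1 b, ∏ k ∈ Icc 1 n, ((i : K) + j + k - 1) / (i + j + k - 2) =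
      ((i - 1)! * (i - 1 + b + n)! : K) / ((i - 1 + b)! * (i - 1 + n)!) := by
  obtain ⟨a, rfl⟩ : ∃ a, i = a + 1 := ⟨i - 1, by omega⟩
  have telescoped : ∀ j ∈ Icc 1 b,
      ∏ k ∈ Icc 1 n, ((a + 1 : ℕ) + j + k - 1 : K) / ((a + 1 : ℕ) + j + k - 2) =
        ((a + n : ℕ) + j : K) / (a + j) := by
    intro j hj
    have hj : 0 < a + j := by have := (mem_Icc.mp hj).1; omega
    convert prod_Icc_add_div_add_sub_one (K := K) hj n using 1
    · refine prod_congr rfl fun k _ => ?_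
      push_cast; ring_nf
    · push_cast; ring
  rw [prod_congr rfl telescoped, prod_div_distrib, prod_Icc_natCast_add_eq_factorial_div,
    prod_Icc_natCast_add_eq_factorial_div, Nat.add_sub_cancel, add_right_comm a n b]
  have factorial_ne_zero := fun m : ℕ => (Nat.cast_ne_zero.mpr m.factorial_ne_zero : (m ! : K) ≠ 0)
  field_simp

end

theorem factorial_product_eq_macmahon_general (L M N : ℕ) (hNL : N < L) (hLM : L ≤ M) :
    (∏ j ∈ Finset.Icc 1 N,
        ((Nat.factorial (j - 1) : ℚ) * (Nat.factorial (M - N + j) : ℚ)) /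
          ((Nat.factorial (L - N + j - 1) : ℚ) * (Nat.factorial (M - L + j) : ℚ)))
      = ∏ i ∈ Finset.Icc 1 N, ∏ j ∈ Finset.Icc 1 (L - N), ∏ k ∈ Finset.Icc 1 (M - L + 1),
          ((i : ℚ) + j + k - 1) / ((i : ℚ) + j + k - 2) := by
  refine prod_congr rfl fun i hi => ?_
  have hi : 1 ≤ i := (mem_Icc.mp hi).1
  rw [macmahon_layer_eq_factorial_ratio hi,
    show M - N + i = i - 1 + (L - N) + (M - L + 1) by omega,
    show L - N + i - 1 = i - 1 + (L - N) by omega, show M - L + i = i - 1 + (M - L + 1) by omega]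

/-- For integers `M ≥ L > N ≥ 1`, the product
`∏_{j=1}^{N} (j-1)! (M-N+j)! / ((L-N+j-1)! (M-L+j)!)` equals MacMahon's product
`PL(N, L-N, M-L+1) = ∏_{i=1}^{N} ∏_{j=1}^{L-N} ∏_{k=1}^{M-L+1} (i+j+k-1)/(i+j+k-2)`. -/
theorem factorial_product_eq_macmahon (L M N : ℕ) (hN : 1 ≤ N) (hNL : N < L) (hLM : L ≤ M) :
    (∏ j ∈ Finset.Icc 1 N,
        ((Nat.factorial (j - 1) : ℚ) * (Nat.factorial (M - N + j) : ℚ)) /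
          ((Nat.factorial (L - N + j - 1) : ℚ) * (Nat.factorial (M - L + j) : ℚ)))
      = ∏ i ∈ Finset.Icc 1 N, ∏ j ∈ Finset.Icc 1 (L - N), ∏ k ∈ Finset.Icc 1 (M - L + 1),
          ((i : ℚ) + j + k - 1) / ((i : ℚ) + j + k - 2) :=
  factorial_product_eq_macmahon_general L M N hNL hLM
end

section
/- With Z^{(1)}_{L,M,N}(n) := ((M−L−1+n)!·(L−n)!)/((n−1)!·(L−n−N+1)!·(M−L+N−1)!) · Z_{L,M−1,N−1}, and Z_{L,M,N} := ∏_{j=1}^{N} ((j−1)!(M−N+j)!)/((L−N+j−1)!(M−L+j)!), one has the summation identity ∑_{n=1}^{L−N+1} Z^{(1)}_{L,M,N}(n) = Z_{L,M,N}, for integers M ≥ L > N ≥ 1. -/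
/-- The partition function `Z_{L,M,N}` of the four-vertex model,
`Z_{L,M,N} = ∏_{j=1}^{N} (j-1)! (M-N+j)! / ((L-N+j-1)! (M-L+j)!)`. -/
noncomputable def Z4v (L M N : ℕ) : ℚ :=
  ∏ j ∈ Finset.Icc 1 N,
    ((Nat.factorial (j - 1) : ℚ) * (Nat.factorial (M - N + j) : ℚ)) /
      ((Nat.factorial (L - N + j - 1) : ℚ) * (Nat.factorial (M - L + j) : ℚ))

/-- The boundary-refined partition function
`Z⁽¹⁾_{L,M,N}(n) = (M-L-1+n)! (L-n)! / ((n-1)! (L-n-N+1)! (M-L+N-1)!) ⬝ Z_{L,M-1,N-1}`,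
where `Z_{L,M-1,N-1} = ∏_{j=1}^{N-1} (j-1)! (M-N+j)! / ((L-N+j)! (M-L+j-1)!)`. -/
noncomputable def Z4vRefined (L M N n : ℕ) : ℚ :=
  ((Nat.factorial (M + n - L - 1) : ℚ) * (Nat.factorial (L - n) : ℚ)) /
      ((Nat.factorial (n - 1) : ℚ) * (Nat.factorial (L + 1 - n - N) : ℚ) *
        (Nat.factorial (M - L + N - 1) : ℚ)) *
    ∏ j ∈ Finset.Icc 1 (N - 1),
      ((Nat.factorial (j - 1) : ℚ) * (Nat.factorial (M - N + j) : ℚ)) /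
        ((Nat.factorial (L - N + j) : ℚ) * (Nat.factorial (M - L + j - 1) : ℚ))

/-!
Write `N = c + 1`, `L = N + a`, `M = L + b`. Then `Z_{L,M,N}` and the product in `Z⁽¹⁾` are
the MacMahon box products `macMahon a (b + 1) (c + 1)` and `macMahon (a + 1) b c`, whose ratio is an explicit
quotient of factorials, while the `n`-dependent prefactors of `Z⁽¹⁾` sum, by the Chu–Vandermonde
identity at negative upper arguments, to `b! c! (a + b + c + 1)! / (a! (b + c)! (b + c + 1)!)`,
which is that ratio.
-/

open Finset Nat

@[to_additive sum_Icc_one_eq_sum_range]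
theorem prod_Icc_one_eq_prod_range {M : Type*} [CommMonoid M] (f : ℕ → M) (n : ℕ) :
    ∏ j ∈ Icc 1 n, f j = ∏ i ∈ range n, f (i + 1) := by
  rw [← Ico_add_one_right_eq_Icc, prod_Ico_eq_prod_range, Nat.add_sub_cancel]
  simp only [add_comm 1]

lemma Ring.choose_neg_natCast_succ (m k : ℕ) :
    Ring.choose (-((m + 1 : ℕ) : ℤ)) k = Int.negOnePow k • (((m + k).choose k : ℕ) : ℤ) := by
  rw [Ring.choose_neg, ← Ring.choose_natCast]
  push_cast
  ring_nf

/-- Chu–Vandermonde for the upper arguments `-(b + 1)` and `-(s + 1)`; the signs `(-1)^i (-1)^j`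
combine to the common `(-1)^n` and cancel. -/
theorem Nat.sum_antidiagonal_add_choose_mul_add_choose (b s n : ℕ) :
    ∑ ij ∈ antidiagonal n, (b + ij.1).choose ij.1 * (s + ij.2).choose ij.2 =
      (b + s + 1 + n).choose n := by
  have h := Ring.add_choose_eq n (Commute.all (-((b + 1 : ℕ) : ℤ)) (-((s + 1 : ℕ) : ℤ)))
  rw [show -((b + 1 : ℕ) : ℤ) + -((s + 1 : ℕ) : ℤ) = -((b + s + 1 + 1 : ℕ) : ℤ) by push_cast; ring,
    Ring.choose_neg_natCast_succ] at h
  have hsign : ∀ ij ∈ antidiagonal n,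
      Ring.choose (-((b + 1 : ℕ) : ℤ)) ij.1 * Ring.choose (-((s + 1 : ℕ) : ℤ)) ij.2 =
        Int.negOnePow n • (((b + ij.1).choose ij.1 * (s + ij.2).choose ij.2 : ℕ) : ℤ) := by
    rintro ⟨i, j⟩ hij
    rw [HasAntidiagonal.mem_antidiagonal] at hij
    rw [Ring.choose_neg_natCast_succ, Ring.choose_neg_natCast_succ, ← hij, Nat.cast_add,
      Int.negOnePow_add]
    simp only [Units.smul_def, Units.val_mul, Nat.cast_mul]
    ring
  rw [sum_congr rfl hsign, ← smul_sum, smul_left_cancel_iff, ← Nat.cast_sum] at h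
  exact_mod_cast h.symm

theorem sum_antidiagonal_factorial_div {K : Type*} [Field K] [CharZero K] (b s n : ℕ) :
    ∑ ij ∈ antidiagonal n, ((b + ij.1)! * (s + ij.2)! : K) / (ij.1 ! * ij.2 !) =
      b ! * s ! * (b + s + 1 + n)! / (n ! * (b + s + 1)!) := by
  have hterm : ∀ ij ∈ antidiagonal n, ((b + ij.1)! * (s + ij.2)! : K) / (ij.1 ! * ij.2 !) =
      b ! * s ! * (((b + ij.1).choose ij.1 * (s + ij.2).choose ij.2 : ℕ) : K) := by
    rintro ⟨i, j⟩ -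
    rw [add_comm b i, add_comm s j, Nat.choose_symm_add, Nat.choose_symm_add,
      ← Nat.add_choose_mul_factorial_mul_factorial i b,
      ← Nat.add_choose_mul_factorial_mul_factorial j s]
    have hi : (i ! : K) ≠ 0 := Nat.cast_ne_zero.2 (factorial_ne_zero i)
    have hj : (j ! : K) ≠ 0 := Nat.cast_ne_zero.2 (factorial_ne_zero j)
    push_cast
    field_simp
  rw [sum_congr rfl hterm, ← mul_sum, ← Nat.cast_sum,
    Nat.sum_antidiagonal_add_choose_mul_add_choose, Nat.cast_choose K (Nat.le_add_left n _),
    Nat.add_sub_cancel]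
  field_simp

/-- MacMahon's product `∏_{i<c} i! (a+b+i)! / ((a+i)! (b+i)!)`, the number of plane partitions
in an `a × b × c` box. -/
noncomputable def macMahon (a b c : ℕ) : ℚ :=
  ∏ i ∈ range c, (i ! * (a + b + i)! : ℚ) / ((a + i)! * (b + i)!)

theorem macMahon_succ (a b c : ℕ) :
    macMahon a b (c + 1) = macMahon a b c * (c ! * (a + b + c)! / ((a + c)! * (b + c)!)) :=
  prod_range_succ _ c

theorem macMahon_succ_succ (a b c : ℕ) :
    macMahon a (b + 1) (c + 1) =
      b ! * c ! * (a + b + c + 1)! / (a ! * (b + c)! * (b + c + 1)!) * macMahon (a + 1) b c := by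
  induction c with
  | zero =>
    simp only [macMahon, zero_add, prod_range_one, prod_range_zero, add_zero, ← add_assoc]
    field_simp
  | succ c ih =>
    rw [macMahon_succ, ih, macMahon_succ,
      show a + (b + 1) + (c + 1) = a + b + c + 1 + 1 by ring, show a + (c + 1) = a + c + 1 by ring,
      show b + 1 + (c + 1) = b + c + 1 + 1 by ring,
      show a + b + (c + 1) + 1 = a + b + c + 1 + 1 by ring, show b + (c + 1) = b + c + 1 by ring,
      show a + 1 + b + c = a + b + c + 1 by ring, show a + 1 + c = a + c + 1 by ring]
    simp only [Nat.factorial_succ c, Nat.factorial_succ (a + c), Nat.factorial_succ (b + c + 1),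
      Nat.factorial_succ (b + c), Nat.factorial_succ (a + b + c + 1)]
    push_cast
    field_simp

theorem Z4v_eq_macMahon (a b c : ℕ) : Z4v (c + a) (c + a + b) c = macMahon a (b + 1) c := by
  rw [Z4v, macMahon, prod_Icc_one_eq_prod_range]
  refine prod_congr rfl fun i _ => ?_
  congr 4 <;> omega

theorem Z4vRefined_eq_mul_macMahon (a b c i : ℕ) (hi : i ≤ a) :
    Z4vRefined (c + 1 + a) (c + 1 + a + b) (c + 1) (i + 1) =
      (b + i)! * (c + (a - i))! / (i ! * (a - i)!) / (b + c)! * macMahon (a + 1) b c := by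
  rw [Z4vRefined, macMahon, Nat.add_sub_cancel, prod_Icc_one_eq_prod_range, div_div]
  congr 1
  · congr 5 <;> omega
  · refine prod_congr rfl fun j _ => ?_
    congr 4 <;> omega

/-- Summing the boundary-refined partition function over the refinement position
recovers the full partition function: `∑_{n=1}^{L-N+1} Z⁽¹⁾_{L,M,N}(n) = Z_{L,M,N}`. -/
theorem sum_refined_eq_Z (L M N : ℕ) (hN : 1 ≤ N) (hNL : N < L) (hLM : L ≤ M) :
    ∑ n ∈ Finset.Icc 1 (L - N + 1), Z4vRefined L M N n = Z4v L M N := by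
  obtain ⟨c, rfl⟩ : ∃ c, N = c + 1 := ⟨N - 1, by omega⟩
  obtain ⟨a, rfl⟩ : ∃ a, L = c + 1 + a := ⟨L - (c + 1), by omega⟩
  obtain ⟨b, rfl⟩ := Nat.exists_eq_add_of_le hLM
  rw [Nat.add_sub_cancel_left, sum_Icc_one_eq_sum_range,
    sum_congr rfl fun i hi => Z4vRefined_eq_mul_macMahon a b c i (Nat.lt_succ_iff.1 (mem_range.1 hi)),
    ← sum_mul, ← sum_div,
    ← Nat.sum_antidiagonal_eq_sum_range_succ (fun i j => ((b + i)! * (c + j)! : ℚ) / (i ! * j !)),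
    sum_antidiagonal_factorial_div, Z4v_eq_macMahon, macMahon_succ_succ,
    show b + c + 1 + a = a + b + c + 1 by ring]
  ring
end

section
/- For real numbers a > 0 and distinct reals x_1,…,x_s, the determinant of Vandermonde-type binomial matrices gives: det_{1≤i,j≤N} C(a + x_j, x_j − i) = ∏_{1≤i<j≤N} (x_j − x_i) · ∏_{j=1}^{N} (a + x_j)! / ((x_j − 1)!·(a + j)!), specialized here to nonnegative integers x_j ≥ 1 and integer a ≥ 0 with the convention C(n,k)=0 for k<0. -/
open Finset Polynomial Nat

theorem Finset.prod_filter_fst_lt_snd {α M : Type*} [LinearOrder α] [Fintype α]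
    [LocallyFiniteOrderTop α] [CommMonoid M] (f : α × α → M) :
    ∏ p ∈ univ.filter (fun p : α × α => p.1 < p.2), f p = ∏ i, ∏ j ∈ Ioi i, f (i, j) :=
  prod_finset_product _ _ _ fun p => by simp

/-- The falling factorial `(m - 1).descFactorial i` vanishes exactly when the lower index
`m - i - 1` is negative, so this one formula also covers the convention `C(n, k) = 0` for `k < 0`. -/
theorem zchoose_add_self_sub_eq_descFactorial (a m i : ℕ) (hm : 1 ≤ m) :
    (zchoose ((a : ℤ) + m) ((m : ℤ) - (i + 1)) : ℚ)
      = (a + m)! / (m - 1)! * ((m - 1).descFactorial i / (a + (i + 1))!) := by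
  rcases lt_or_ge (m - 1) i with him | him
  · rw [zchoose, if_neg (by omega), Nat.descFactorial_eq_zero_iff_lt.mpr him]
    simp
  · have hchoose : zchoose ((a : ℤ) + m) ((m : ℤ) - (i + 1)) = (a + m).choose (m - 1 - i) := by
      rw [zchoose, if_pos (by omega)]
      congr 1; omega
    have hfact : ((m - 1 - i)! : ℚ) * (m - 1).descFactorial i = (m - 1)! := by
      exact_mod_cast Nat.factorial_mul_descFactorial him
    rw [hchoose, Nat.cast_choose ℚ (by omega), ← hfact, show a + m - (m - 1 - i) = a + (i + 1) by omega]
    have : ((m - 1).descFactorial i : ℚ) ≠ 0 := by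
      exact_mod_cast (Nat.descFactorial_pos.mpr him).ne'
    field_simp

theorem Matrix.det_of_mul_mul {n R : Type*} [Fintype n] [DecidableEq n] [CommRing R]
    (r c : n → R) (M : n → n → R) :
    (Matrix.of fun i j => r i * M i j * c j).det = (∏ i, r i) * (∏ j, c j) * (Matrix.of M).det := by
  rw [show Matrix.of (fun i j => r i * M i j * c j) = diagonal r * Matrix.of M * diagonal c by
    ext; simp [mul_diagonal, diagonal_mul]]
  simp only [det_mul, det_diagonal]
  ring

theorem Matrix.det_descPochhammer_eval_eq_det_vandermonde {R : Type*} [CommRing R] [Nontrivial R]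
    [NoZeroDivisors R] {n : ℕ} (v : Fin n → R) :
    (Matrix.of fun i j : Fin n => (descPochhammer R i).eval (v j)).det = (vandermonde v).det := by
  rw [det_eval_matrixOfPolynomials_eq_det_vandermonde v (fun i => descPochhammer R i)
    (fun i => descPochhammer_natDegree R i) (fun i => monic_descPochhammer R i), ← det_transpose]
  rfl

theorem det_binomial_vandermonde_general (N a : ℕ) (x : Fin N → ℕ)
    (hx1 : ∀ i, 1 ≤ x i) :
    (Matrix.of fun i j : Fin N =>
        (zchoose ((a : ℤ) + x j) ((x j : ℤ) - (i.1 + 1)) : ℚ)).det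
      = (∏ p ∈ Finset.univ.filter (fun p : Fin N × Fin N => p.1 < p.2),
            ((x p.2 : ℚ) - (x p.1 : ℚ))) *
        ∏ j : Fin N,
          (Nat.factorial (a + x j) : ℚ) /
            ((Nat.factorial (x j - 1) : ℚ) * (Nat.factorial (a + (j.1 + 1)) : ℚ)) := by
  have hentry : ∀ i j : Fin N, (zchoose ((a : ℤ) + x j) ((x j : ℤ) - (i.1 + 1)) : ℚ)
      = (1 / (a + (i.1 + 1))! : ℚ) * (descPochhammer ℚ i).eval ((x j : ℚ) - 1) *
          ((a + x j)! / (x j - 1)!) := fun i j => by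
    rw [zchoose_add_self_sub_eq_descFactorial a (x j) i (hx1 j), ← Nat.cast_pred (hx1 j),
      descPochhammer_eval_eq_descFactorial]
    ring
  simp_rw [hentry]
  rw [Matrix.det_of_mul_mul, Matrix.det_descPochhammer_eval_eq_det_vandermonde, Matrix.det_vandermonde]
  simp only [sub_sub_sub_cancel_right, prod_filter_fst_lt_snd, div_mul_eq_div_mul_one_div,
    prod_mul_distrib]
  ring

/-- Binomial determinant evaluation (Krattenthaler, Theorem 26 form), specialized
to integers `a ≥ 0` and distinct integers `x_j ≥ 1`:
`det_{1≤i,j≤N} C(a+x_j, x_j-i)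
   = ∏_{1≤i<j≤N} (x_j-x_i) ⬝ ∏_{j=1}^{N} (a+x_j)! / ((x_j-1)! (a+j)!)`. -/
theorem det_binomial_vandermonde (N a : ℕ) (x : Fin N → ℕ)
    (hx1 : ∀ i, 1 ≤ x i) (hinj : Function.Injective x) :
    (Matrix.of fun i j : Fin N =>
        (zchoose ((a : ℤ) + x j) ((x j : ℤ) - (i.1 + 1)) : ℚ)).det
      = (∏ p ∈ Finset.univ.filter (fun p : Fin N × Fin N => p.1 < p.2),
            ((x p.2 : ℚ) - (x p.1 : ℚ))) *
        ∏ j : Fin N,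
          (Nat.factorial (a + x j) : ℚ) /
            ((Nat.factorial (x j - 1) : ℚ) * (Nat.factorial (a + (j.1 + 1)) : ℚ)) :=
  det_binomial_vandermonde_general N a x hx1
end

section
/- The envelope of the one-parameter family of lines u(u−𝓛)·y + (𝓜(𝓛−𝓝−u)+𝓝u)·x + 𝓝(𝓜−u)·u = 0, for parameter u ∈ (0, 𝓛−𝓝], lies on the ellipse (𝓛y − 𝓝𝓜 + (𝓜−𝓝)x)² + 4𝓜(𝓛−𝓝)·x·(𝓝−y) = 0, where 0 < 𝓝 < 𝓛 < 𝓜 are real parameters. -/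
/-! The family is quadratic in the parameter: `F(x,y,u) = a u² + b u + c` with
`a = y - 𝓝`, `b = 𝓝𝓜 - 𝓛y - (𝓜 - 𝓝)x` and `c = 𝓜(𝓛 - 𝓝)x`. A point of the envelope makes `u`
a double root of this quadratic, so its discriminant `b² - 4ac` vanishes, and that discriminant
is the left-hand side of the ellipse equation. -/

theorem deriv_quadratic {𝕜 : Type*} [NontriviallyNormedField 𝕜] (a b c u : 𝕜) :
    deriv (fun s => a * (s * s) + b * s + c) u = 2 * a * u + b := by
  have h : HasDerivAt (fun s => a * (s * s) + b * s + c) (a * (1 * u + u * 1) + b * 1) u :=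
    (((hasDerivAt_id u).mul (hasDerivAt_id u)).const_mul a).add
      ((hasDerivAt_id u).const_mul b) |>.add_const c
  rw [h.deriv]
  ring

theorem discrim_eq_zero_of_deriv_eq_zero {𝕜 : Type*} [NontriviallyNormedField 𝕜] {a b c u : 𝕜}
    (hroot : a * (u * u) + b * u + c = 0)
    (hderiv : deriv (fun s => a * (s * s) + b * s + c) u = 0) :
    discrim a b c = 0 := by
  rw [discrim_eq_sq_of_quadratic_eq_zero hroot, ← deriv_quadratic, hderiv, sq, zero_mul]

theorem envelope_on_ellipse_general (𝓛 𝓜 𝓝 x y u : ℝ)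
    (hF : u * (u - 𝓛) * y + (𝓜 * (𝓛 - 𝓝 - u) + 𝓝 * u) * x + 𝓝 * (𝓜 - u) * u = 0)
    (hFu : deriv (fun s : ℝ =>
        s * (s - 𝓛) * y + (𝓜 * (𝓛 - 𝓝 - s) + 𝓝 * s) * x + 𝓝 * (𝓜 - s) * s) u = 0) :
    (𝓛 * y - 𝓝 * 𝓜 + (𝓜 - 𝓝) * x) ^ 2 + 4 * 𝓜 * (𝓛 - 𝓝) * x * (𝓝 - y) = 0 := by
  have hquadratic : (fun s : ℝ =>
      s * (s - 𝓛) * y + (𝓜 * (𝓛 - 𝓝 - s) + 𝓝 * s) * x + 𝓝 * (𝓜 - s) * s) =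
      fun s => (y - 𝓝) * (s * s) + (𝓝 * 𝓜 - 𝓛 * y - (𝓜 - 𝓝) * x) * s + 𝓜 * (𝓛 - 𝓝) * x := by
    funext s
    ring
  rw [hquadratic] at hFu
  have hdiscrim := discrim_eq_zero_of_deriv_eq_zero (by linear_combination hF) hFu
  rw [discrim] at hdiscrim
  linear_combination hdiscrim

/-- The envelope of the family of lines
`F(x,y,u) = u(u-𝓛)y + (𝓜(𝓛-𝓝-u)+𝓝u)x + 𝓝(𝓜-u)u = 0`, `u ∈ (0, 𝓛-𝓝]`,
lies on the ellipse `(𝓛y - 𝓝𝓜 + (𝓜-𝓝)x)² + 4𝓜(𝓛-𝓝)x(𝓝-y) = 0`: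
any point `(x,y)` satisfying `F(x,y,u) = 0` and `∂F/∂u(x,y,u) = 0` for some
parameter `u` in the range satisfies the ellipse equation. -/
theorem envelope_on_ellipse (𝓛 𝓜 𝓝 x y u : ℝ)
    (h𝓝 : 0 < 𝓝) (h𝓝𝓛 : 𝓝 < 𝓛) (h𝓛𝓜 : 𝓛 < 𝓜) (hu : 0 < u) (hu' : u ≤ 𝓛 - 𝓝)
    (hF : u * (u - 𝓛) * y + (𝓜 * (𝓛 - 𝓝 - u) + 𝓝 * u) * x + 𝓝 * (𝓜 - u) * u = 0)
    (hFu : deriv (fun s : ℝ =>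
        s * (s - 𝓛) * y + (𝓜 * (𝓛 - 𝓝 - s) + 𝓝 * s) * x + 𝓝 * (𝓜 - s) * s) u = 0) :
    (𝓛 * y - 𝓝 * 𝓜 + (𝓜 - 𝓝) * x) ^ 2 + 4 * 𝓜 * (𝓛 - 𝓝) * x * (𝓝 - y) = 0 :=
  envelope_on_ellipse_general 𝓛 𝓜 𝓝 x y u hF hFu
end

section
/- Let 0 < 𝓝 < 𝓛 < 𝓜 be reals and define f₁(x) = (𝓜𝓝(𝓛−2x) + (𝓜+𝓝)𝓛x)/𝓛² + 2√(𝓜𝓝(𝓛−𝓝)(𝓜−𝓛)(𝓛−x)x)/𝓛². Then for every x ∈ [0,𝓛], the point (x, f₁(x)) satisfies the ellipse equation (𝓛y − 𝓝𝓜 + (𝓜−𝓝)x)² + 4𝓜(𝓛−𝓝)x(𝓝−y) = 0. -/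
/-! The ellipse equation is quadratic in `y` with leading coefficient `𝓛²`, and its two roots are
`(𝓜𝓝(𝓛-2x) + (𝓜+𝓝)𝓛x ± 2s)/𝓛²` for any `s` with `s² = 𝓜𝓝(𝓛-𝓝)(𝓜-𝓛)(𝓛-x)x`.
For `0 < 𝓝 < 𝓛 < 𝓜` and `x ∈ [0, 𝓛]` this radicand is nonnegative, so `f₁` is the root with
`s` its square root. -/

/-- The northwest arc `Γ₁` of the arctic curve:
`f₁(x) = (𝓜𝓝(𝓛-2x) + (𝓜+𝓝)𝓛x)/𝓛² + 2√(𝓜𝓝(𝓛-𝓝)(𝓜-𝓛)(𝓛-x)x)/𝓛²`. -/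
noncomputable def f₁ (𝓛 𝓜 𝓝 x : ℝ) : ℝ :=
  (𝓜 * 𝓝 * (𝓛 - 2 * x) + (𝓜 + 𝓝) * 𝓛 * x) / 𝓛 ^ 2 +
    2 * Real.sqrt (𝓜 * 𝓝 * (𝓛 - 𝓝) * (𝓜 - 𝓛) * (𝓛 - x) * x) / 𝓛 ^ 2

lemma ellipse_eq_zero_of_sq_eq {L M N x y s : ℝ} (hL : L ≠ 0)
    (hs : s ^ 2 = M * N * (L - N) * (M - L) * (L - x) * x)
    (hy : L ^ 2 * y = M * N * (L - 2 * x) + (M + N) * L * x + 2 * s) :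
    (L * y - N * M + (M - N) * x) ^ 2 + 4 * M * (L - N) * x * (N - y) = 0 := by
  -- By `hy`, `L * (L * y - N * M + (M - N) * x) = 2 * (M * (L - N) * x + s)`.
  have h : L ^ 2 * ((L * y - N * M + (M - N) * x) ^ 2 + 4 * M * (L - N) * x * (N - y)) = 0 := by
    linear_combination 4 * hs + (L * (L * y - N * M + (M - N) * x) + 2 * s - 2 * M * x * (L - N)) * hy
  exact (mul_eq_zero.1 h).resolve_left (pow_ne_zero 2 hL)

lemma arctic_radicand_nonneg {L M N x : ℝ} (hN : 0 ≤ N) (hNL : N ≤ L) (hLM : L ≤ M)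
    (hx : x ∈ Set.Icc 0 L) :
    0 ≤ M * N * (L - N) * (M - L) * (L - x) * x := by
  obtain ⟨hx0, hxL⟩ := hx
  have hM : 0 ≤ M := by linarith
  have hLN : 0 ≤ L - N := sub_nonneg.2 hNL
  have hML : 0 ≤ M - L := sub_nonneg.2 hLM
  have hLx : 0 ≤ L - x := sub_nonneg.2 hxL
  positivity

lemma sq_mul_f₁ {L M N x : ℝ} (hL : L ≠ 0) :
    L ^ 2 * f₁ L M N x = M * N * (L - 2 * x) + (M + N) * L * x +
      2 * Real.sqrt (M * N * (L - N) * (M - L) * (L - x) * x) := by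
  unfold f₁
  field_simp

/-- For `0 < 𝓝 < 𝓛 < 𝓜` and every `x ∈ [0, 𝓛]`, the point `(x, f₁(x))`
satisfies the ellipse equation `(𝓛y - 𝓝𝓜 + (𝓜-𝓝)x)² + 4𝓜(𝓛-𝓝)x(𝓝-y) = 0`. -/
theorem arctic_arc_on_ellipse (𝓛 𝓜 𝓝 x : ℝ)
    (h𝓝 : 0 < 𝓝) (h𝓝𝓛 : 𝓝 < 𝓛) (h𝓛𝓜 : 𝓛 < 𝓜)
    (hx : x ∈ Set.Icc (0 : ℝ) 𝓛) :
    (𝓛 * f₁ 𝓛 𝓜 𝓝 x - 𝓝 * 𝓜 + (𝓜 - 𝓝) * x) ^ 2 +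
      4 * 𝓜 * (𝓛 - 𝓝) * x * (𝓝 - f₁ 𝓛 𝓜 𝓝 x) = 0 := by
  have hrad := arctic_radicand_nonneg h𝓝.le h𝓝𝓛.le h𝓛𝓜.le hx
  have hL : 𝓛 ≠ 0 := by linarith
  exact ellipse_eq_zero_of_sq_eq hL (Real.sq_sqrt hrad) (sq_mul_f₁ hL)
end

section
/- Let 0 < 𝓝 < 𝓛 < 𝓜, x_c = (𝓜−𝓛)(𝓛−𝓝)/(𝓜−𝓛+𝓝), and f₁, f₂ as in the arctic curve theorem (f₂(x) = 𝓛−𝓜−𝓝−x + 2f₁(x)). Then f₁(x_c) = f₂(x_c), i.e., the arcs Γ₁ and Γ₂ join continuously at the contact point x = x_c. -/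
/-- The north arc `Γ₂`: `f₂(x) = 𝓛 - 𝓜 - 𝓝 - x + 2 f₁(x)`. -/
noncomputable def f₂ (𝓛 𝓜 𝓝 x : ℝ) : ℝ :=
  𝓛 - 𝓜 - 𝓝 - x + 2 * f₁ 𝓛 𝓜 𝓝 x

/-- The arcs `Γ₁` and `Γ₂` of the arctic curve join continuously at the
contact point `x_c = (𝓜-𝓛)(𝓛-𝓝)/(𝓜-𝓛+𝓝)`: `f₁(x_c) = f₂(x_c)`. -/
theorem arcs_join_at_contact_point (𝓛 𝓜 𝓝 : ℝ)
    (h𝓝 : 0 < 𝓝) (h𝓝𝓛 : 𝓝 < 𝓛) (h𝓛𝓜 : 𝓛 < 𝓜) :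
    f₁ 𝓛 𝓜 𝓝 ((𝓜 - 𝓛) * (𝓛 - 𝓝) / (𝓜 - 𝓛 + 𝓝)) =
      f₂ 𝓛 𝓜 𝓝 ((𝓜 - 𝓛) * (𝓛 - 𝓝) / (𝓜 - 𝓛 + 𝓝)) := by
  have hD : 0 < 𝓜 - 𝓛 + 𝓝 := by linarith
  have h𝓛 : 0 < 𝓛 := by linarith
  have hM : 0 < 𝓜 := by linarith
  have harg : 𝓜 * 𝓝 * (𝓛 - 𝓝) * (𝓜 - 𝓛) *
      (𝓛 - (𝓜 - 𝓛) * (𝓛 - 𝓝) / (𝓜 - 𝓛 + 𝓝)) * ((𝓜 - 𝓛) * (𝓛 - 𝓝) / (𝓜 - 𝓛 + 𝓝))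
      = (𝓜 * 𝓝 * (𝓜 - 𝓛) * (𝓛 - 𝓝) / (𝓜 - 𝓛 + 𝓝)) ^ 2 := by
    field_simp
    ring
  have hnn : 0 ≤ 𝓜 * 𝓝 * (𝓜 - 𝓛) * (𝓛 - 𝓝) / (𝓜 - 𝓛 + 𝓝) := div_nonneg (by nlinarith [mul_pos hM h𝓝, mul_pos (sub_pos.2 h𝓛𝓜) (sub_pos.2 h𝓝𝓛)]) hD.le
  simp only [f₁, f₂, harg, Real.sqrt_sq hnn]
  field_simp
  ring
end
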